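/- arXiv:math/0104166 — 4 statements merged into one kernel-verified Lean document; each statement's English description precedes it below -/
import Mathlib

section
/- Every normal monoid is a filtered union of finitely generated normal monoids, and every seminormal monoid is a filtered union of finitely generated seminormal monoids. -/
/-- A submonoid `N` of a `ℚ`-vector space (equivalently, a commutative, cancellative,
torsion-free monoid) is *normal* if every element of its group of differences
having a positive multiple in `N` lies in `N`. -/
def IsNormalMonoid {V : Type} [AddCommGroup V] [Module ℚ V] (N : AddSubmonoid V) : Prop :=
  ∀ x ∈ AddSubgroup.closure (N : Set V), (∃ c : ℕ, 0 < c ∧ c • x ∈ N) → x ∈ N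

/-- A submonoid `N` of a `ℚ`-vector space is *seminormal* if every element `x` of its
group of differences with `2 • x ∈ N` and `3 • x ∈ N` lies in `N`. -/
def IsSeminormalMonoid {V : Type} [AddCommGroup V] [Module ℚ V] (N : AddSubmonoid V) : Prop :=
  ∀ x ∈ AddSubgroup.closure (N : Set V), (2 : ℕ) • x ∈ N → (3 : ℕ) • x ∈ N → x ∈ N


/-!
For a finite subset `F` of `M`, let `C` be the monoid generated by `F`. Its normalization
(the `x ∈ gp C` with `c • x ∈ C` for some `c > 0`) and its seminormalization (the `x ∈ gp C` with
`n • x ∈ C` for all large `n`) are normal, resp. seminormal, and lie in `M` whenever `M` is;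
as `F` runs over the finite subsets of `M` they form the required directed family.

Both are finitely generated: each of their elements is `d + ∑ mᵢ • fᵢ` with `d` one of the
finitely many lattice points of the zonotope `∑ [0, 1] • fᵢ`, and by Dickson's lemma the
exponent vectors `m` that land in a given submonoid have finitely many minimal elements.
-/

open Filter

universe u

theorem AddSubgroup.closure_addSubmonoidClosure {G : Type*} [AddCommGroup G] (s : Set G) :
    AddSubgroup.closure (AddSubmonoid.closure s : Set G) = AddSubgroup.closure s :=
  le_antisymm
    ((AddSubgroup.closure_le _).2 (AddSubmonoid.closure_le.2 AddSubgroup.subset_closure))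
    (AddSubgroup.closure_mono AddSubmonoid.subset_closure)

theorem abs_le_sum_abs_of_mul_eq_sum {ι : Type*} [Fintype ι] {c : ℕ} (hc : 0 < c) {m : ι → ℕ}
    (hm : ∀ i, m i ≤ c) {r : ℤ} {a : ι → ℤ} (h : c * r = ∑ i, m i * a i) :
    |r| ≤ ∑ i, |a i| := by
  refine le_of_mul_le_mul_left ?_ (Int.natCast_pos.2 hc)
  calc (c : ℤ) * |r| = |∑ i, (m i : ℤ) * a i| := by rw [← h, abs_mul, Nat.abs_cast]
    _ ≤ ∑ i, (m i : ℤ) * |a i| := by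
        simpa only [abs_mul, Nat.abs_cast] using
          Finset.abs_sum_le_sum_abs (fun i => (m i : ℤ) * a i) Finset.univ
    _ ≤ ∑ i, (c : ℤ) * |a i| := by gcongr with i; exact_mod_cast hm i
    _ = c * ∑ i, |a i| := (Finset.mul_sum ..).symm

theorem finite_setOf_minimal {α : Type*} [PartialOrder α] [WellQuasiOrderedLE α] (s : Set α) :
    {x | Minimal (· ∈ s) x}.Finite :=
  (setOfPred_minimal_antichain _).finite_of_partiallyWellOrderedOn
    (Set.isPWO_of_wellQuasiOrderedLE _)

namespace AddSubmonoid

theorem exists_directed_fg_cover {V : Type u} [AddCommMonoid V] (M : AddSubmonoid V)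
    (H : AddSubmonoid V → AddSubmonoid V) (P : AddSubmonoid V → Prop) (hle : ∀ N, N ≤ H N)
    (hmono : Monotone H) (hleM : ∀ N ≤ M, H N ≤ M) (hfg : ∀ F : Finset V, (H (closure F)).FG)
    (hP : ∀ F : Finset V, P (H (closure F))) :
    ∃ (ι : Type u) (N : ι → AddSubmonoid V), Nonempty ι ∧
      (∀ i j, ∃ k, N i ≤ N k ∧ N j ≤ N k) ∧
      (∀ i, N i ≤ M ∧ (N i).FG ∧ P (N i)) ∧
      (M : Set V) = ⋃ i, (N i : Set V) := by
  classical
  have H_closure_le {F : Finset V} (hF : (F : Set V) ⊆ M) : H (closure F) ≤ M :=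
    hleM _ (closure_le.2 hF)
  refine ⟨{F : Finset V // (F : Set V) ⊆ M}, fun F => H (closure F), ⟨⟨∅, by simp⟩⟩,
    fun F G => ?_, fun F => ⟨H_closure_le F.2, hfg F, hP F⟩, ?_⟩
  · refine ⟨⟨F.1 ∪ G.1, by simpa using And.intro F.2 G.2⟩, ?_, ?_⟩ <;>
      exact hmono (closure_mono (by simp))
  · refine subset_antisymm (fun x hx => Set.mem_iUnion.2 ⟨⟨{x}, by simpa using hx⟩, ?_⟩)
      (Set.iUnion_subset fun F => H_closure_le F.2)
    exact hle _ (subset_closure (by simp))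

section Hulls

variable {V : Type*} [AddCommGroup V]

def normalization (N : AddSubmonoid V) : AddSubmonoid V where
  carrier := {x | x ∈ AddSubgroup.closure (N : Set V) ∧ ∃ c : ℕ, 0 < c ∧ c • x ∈ N}
  zero_mem' := ⟨zero_mem _, 1, one_pos, by simp⟩
  add_mem' := by
    rintro x y ⟨hx, c, hc, hcx⟩ ⟨hy, e, he, hey⟩
    refine ⟨add_mem hx hy, c * e, Nat.mul_pos hc he, ?_⟩
    rw [smul_add, mul_comm, mul_smul, mul_comm, mul_smul]
    exact add_mem (nsmul_mem hcx e) (nsmul_mem hey c)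

def seminormalization (N : AddSubmonoid V) : AddSubmonoid V where
  carrier := {x | x ∈ AddSubgroup.closure (N : Set V) ∧ ∀ᶠ n : ℕ in atTop, n • x ∈ N}
  zero_mem' := ⟨zero_mem _, Eventually.of_forall fun n => by simp⟩
  add_mem' := by
    rintro x y ⟨hx, hnx⟩ ⟨hy, hny⟩
    exact ⟨add_mem hx hy,
      (hnx.and hny).mono fun n h => by simpa [smul_add] using add_mem h.1 h.2⟩

theorem le_normalization (N : AddSubmonoid V) : N ≤ N.normalization :=
  fun _ hx => ⟨AddSubgroup.subset_closure hx, 1, one_pos, by simpa using hx⟩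

theorem le_seminormalization (N : AddSubmonoid V) : N ≤ N.seminormalization :=
  fun _ hx => ⟨AddSubgroup.subset_closure hx, Eventually.of_forall fun n => nsmul_mem hx n⟩

theorem seminormalization_le_normalization (N : AddSubmonoid V) :
    N.seminormalization ≤ N.normalization := fun _ ⟨hx, hnx⟩ =>
  ⟨hx, (hnx.and (eventually_gt_atTop 0)).exists.imp fun _ h => ⟨h.2, h.1⟩⟩

theorem normalization_mono : Monotone (normalization (V := V)) :=
  fun _ _ h _ ⟨hx, c, hc, hcx⟩ =>
    ⟨AddSubgroup.closure_mono h hx, c, hc, h hcx⟩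

theorem seminormalization_mono : Monotone (seminormalization (V := V)) :=
  fun _ _ h _ ⟨hx, hnx⟩ => ⟨AddSubgroup.closure_mono h hx, hnx.mono fun _ hn => h hn⟩

theorem closure_normalization_le (N : AddSubmonoid V) :
    AddSubgroup.closure (N.normalization : Set V) ≤ AddSubgroup.closure (N : Set V) :=
  (AddSubgroup.closure_le _).2 fun _ hx => hx.1

theorem closure_seminormalization_le (N : AddSubmonoid V) :
    AddSubgroup.closure (N.seminormalization : Set V) ≤ AddSubgroup.closure (N : Set V) :=
  (AddSubgroup.closure_le _).2 fun _ hx => hx.1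

end Hulls

end AddSubmonoid

section Normality

variable {V : Type} [AddCommGroup V] [Module ℚ V]

theorem isNormalMonoid_normalization (N : AddSubmonoid V) : IsNormalMonoid N.normalization := by
  rintro x hx ⟨c, hc, -, e, he, hecx⟩
  refine ⟨N.closure_normalization_le hx, e * c, Nat.mul_pos he hc, ?_⟩
  rwa [mul_smul]

theorem IsNormalMonoid.normalization_le {M N : AddSubmonoid V} (hM : IsNormalMonoid M)
    (hNM : N ≤ M) : N.normalization ≤ M :=
  fun x ⟨hx, c, hc, hcx⟩ => hM x (AddSubgroup.closure_mono hNM hx) ⟨c, hc, hNM hcx⟩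

theorem isSeminormalMonoid_seminormalization (N : AddSubmonoid V) :
    IsSeminormalMonoid N.seminormalization := by
  rintro x hx ⟨-, h2x⟩ ⟨-, h3x⟩
  refine ⟨N.closure_seminormalization_le hx, ?_⟩
  obtain ⟨a, ha⟩ := eventually_atTop.1 (h2x.and h3x)
  refine eventually_atTop.2 ⟨5 * a + 2, fun n hn => ?_⟩
  -- every `n ≥ 5a + 2` is `2i + 3j` with `i, j ≥ a`
  obtain ⟨i, j, hi, hj, rfl⟩ : ∃ i j, a ≤ i ∧ a ≤ j ∧ n = 2 * i + 3 * j :=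
    ⟨(n - 3 * (a + (n + a) % 2)) / 2, a + (n + a) % 2, by omega⟩
  rw [add_smul, mul_comm, mul_smul, mul_comm, mul_smul]
  exact add_mem (ha i hi).1 (ha j hj).2

-- Seminormality applied to `k • x`, whose doubles and triples are later multiples, lowers `k`.
theorem IsSeminormalMonoid.mem_of_forall_lt_nsmul_mem {M : AddSubmonoid V}
    (hM : IsSeminormalMonoid M) {x : V} (hx : x ∈ AddSubgroup.closure (M : Set V)) :
    ∀ k : ℕ, (∀ n, k < n → n • x ∈ M) → x ∈ M
  | 0, h => by simpa using h 1 one_pos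
  | k + 1, h => hM.mem_of_forall_lt_nsmul_mem hx k fun n hn => by
      obtain rfl | hn := eq_or_lt_of_le (Nat.succ_le_of_lt hn)
      · refine hM _ (nsmul_mem hx _) ?_ ?_ <;> rw [smul_smul] <;> exact h _ (by omega)
      · exact h n hn

theorem IsSeminormalMonoid.seminormalization_le {M N : AddSubmonoid V}
    (hM : IsSeminormalMonoid M) (hNM : N ≤ M) : N.seminormalization ≤ M := by
  rintro x ⟨hx, hnx⟩
  obtain ⟨k, hk⟩ := eventually_atTop.1 hnx
  exact hM.mem_of_forall_lt_nsmul_mem (AddSubgroup.closure_mono hNM hx) k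
    fun n hn => hNM (hk n hn.le)

end Normality

section Zonotope

variable {V : Type*} [AddCommGroup V]

open AddSubmonoid

-- A lattice point `x = ∑ (mᵢ / c) • fᵢ` of the zonotope `∑ [0, 1] • fᵢ`, with the rational
-- coefficients written over a common denominator `c`.
def latticeZonotope (F : Finset V) : Set V :=
  {x | x ∈ AddSubgroup.closure (F : Set V) ∧
    ∃ c : ℕ, 0 < c ∧ ∃ m : F → ℕ, (∀ i, m i ≤ c) ∧ c • x = ∑ i, m i • (i : V)}

theorem latticeZonotope_finite [IsAddTorsionFree V] (F : Finset V) :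
    (latticeZonotope F).Finite := by
  classical
  let L := Submodule.span ℤ (F : Set V)
  let b := Module.Free.chooseBasis ℤ L
  let gen (i : F) : L := ⟨i, Submodule.subset_span i.2⟩
  let A j := ∑ i, |b.repr (gen i) j|
  have coord_bound {y : L} (hy : (y : V) ∈ latticeZonotope F) :
      y ∈ b.equivFun ⁻¹' Set.Icc (-A) A := by
    obtain ⟨-, c, hc, m, hm, hcy⟩ := hy
    have hcy' : c • y = ∑ i, m i • gen i := Subtype.ext (by simpa using hcy)
    refine ⟨fun j => ?_, fun j => ?_⟩ <;>
    · have := abs_le_sum_abs_of_mul_eq_sum hc hm (r := b.repr y j)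
        (a := fun i => b.repr (gen i) j)
        (by simpa [nsmul_eq_mul, Finsupp.finsetSum_apply] using congr($(congrArg b.repr hcy') j))
      simp only [Module.Basis.equivFun_apply, Pi.neg_apply]
      linarith [abs_le.1 this]
  refine (((Set.finite_Icc (-A) A).preimage b.equivFun.injective.injOn).image Subtype.val).subset
    fun x hx => ?_
  have hxL : x ∈ L := by
    rw [← Submodule.mem_toAddSubgroup, Submodule.span_int_eq_addSubgroupClosure]; exact hx.1
  exact ⟨⟨x, hxL⟩, coord_bound hx, rfl⟩

theorem exists_mem_latticeZonotope_add_sum {F : Finset V} {x : V}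
    (hx : x ∈ (closure (F : Set V)).normalization) :
    ∃ d ∈ latticeZonotope F, ∃ m : F → ℕ, x = d + ∑ i, m i • (i : V) := by
  obtain ⟨hx, c, hc, hcx⟩ := hx
  rw [AddSubgroup.closure_addSubmonoidClosure] at hx
  obtain ⟨m, hm⟩ := mem_closure_finset'.1 hcx
  -- divide the exponents by `c` with remainder
  refine ⟨x - ∑ i, (m i / c) • (i : V), ⟨sub_mem hx (sum_mem fun i _ =>
    nsmul_mem (AddSubgroup.subset_closure i.2) _), c, hc, fun i => m i % c,
    fun i => (Nat.mod_lt _ hc).le, ?_⟩, fun i => m i / c, (sub_add_cancel _ _).symm⟩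
  rw [smul_sub, hm, Finset.smul_sum, sub_eq_iff_eq_add, ← Finset.sum_add_distrib]
  refine Finset.sum_congr rfl fun i _ => ?_
  rw [smul_smul, ← add_smul, Nat.mod_add_div]

end Zonotope

namespace AddSubmonoid

variable {V : Type*} [AddCommGroup V] [IsAddTorsionFree V]

theorem fg_of_closure_le_of_le_normalization {F : Finset V} {S : AddSubmonoid V}
    (hFS : closure (F : Set V) ≤ S) (hS : S ≤ (closure (F : Set V)).normalization) : S.FG := by
  let shift (d : V) (m : F → ℕ) : V := d + ∑ i, m i • (i : V)
  let G : Set V := F ∪ ⋃ d ∈ latticeZonotope F, shift d '' {m | Minimal (shift d · ∈ S) m}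
  refine (fg_iff S).2 ⟨G, le_antisymm (closure_le.2 ?_) fun x hx => ?_, ?_⟩
  · rintro _ (hx | ⟨_, ⟨d, rfl⟩, _, ⟨-, rfl⟩, m, hm, rfl⟩)
    exacts [hFS (subset_closure hx), hm.1]
  · obtain ⟨d, hd, m, rfl⟩ := exists_mem_latticeZonotope_add_sum (hS hx)
    obtain ⟨b, hbm, hb⟩ := exists_minimal_le_of_wellFoundedLT (shift d · ∈ S) m hx
    have hsplit : shift d m = shift d b + ∑ i, (m i - b i) • (i : V) := by
      simp only [shift, add_assoc, ← Finset.sum_add_distrib, ← add_smul,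
        Nat.add_sub_cancel' (hbm _)]
    change shift d m ∈ _
    rw [hsplit]
    refine add_mem (subset_closure (Or.inr ?_)) (closure_mono Set.subset_union_left
      (mem_closure_finset'.2 ⟨_, rfl⟩))
    exact Set.mem_biUnion hd ⟨b, hb, rfl⟩
  · exact F.finite_toSet.union ((latticeZonotope_finite F).biUnion fun d _ =>
      (finite_setOf_minimal _).image _)

end AddSubmonoid

/-- Every normal monoid is a filtered union of finitely generated normal monoids, and
every seminormal monoid is a filtered union of finitely generated seminormal monoids. -/
theorem stmt1 {V : Type} [AddCommGroup V] [Module ℚ V] (M : AddSubmonoid V) :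
    (IsNormalMonoid M →
      ∃ (ι : Type) (N : ι → AddSubmonoid V), Nonempty ι ∧
        (∀ i j, ∃ k, N i ≤ N k ∧ N j ≤ N k) ∧
        (∀ i, N i ≤ M ∧ (N i).FG ∧ IsNormalMonoid (N i)) ∧
        (M : Set V) = ⋃ i, (N i : Set V)) ∧
    (IsSeminormalMonoid M →
      ∃ (ι : Type) (N : ι → AddSubmonoid V), Nonempty ι ∧
        (∀ i j, ∃ k, N i ≤ N k ∧ N j ≤ N k) ∧
        (∀ i, N i ≤ M ∧ (N i).FG ∧ IsSeminormalMonoid (N i)) ∧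
        (M : Set V) = ⋃ i, (N i : Set V)) := by
  have : IsAddTorsionFree V := .of_module_rat V
  open AddSubmonoid in
  exact ⟨fun hM => exists_directed_fg_cover M normalization IsNormalMonoid le_normalization
      normalization_mono (fun _ => hM.normalization_le)
      (fun _ => fg_of_closure_le_of_le_normalization (le_normalization _) le_rfl)
      (fun _ => isNormalMonoid_normalization _),
    fun hM => exists_directed_fg_cover M seminormalization IsSeminormalMonoid le_seminormalization
      seminormalization_mono (fun _ => hM.seminormalization_le)
      (fun _ => fg_of_closure_le_of_le_normalization (le_seminormalization _)
        (seminormalization_le_normalization _))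
      (fun _ => isSeminormalMonoid_seminormalization _)⟩
end

section
/- Normalization and seminormalization preserve finite generation: if M is a finitely generated (commutative, cancellative, torsion-free) monoid, then its normalization n(M) and its seminormalization sn(M) are also finitely generated monoids. -/
/-!
Let `S` generate `M`. Every `x ∈ n(M)` is a nonnegative rational combination of `S`; removing
the integer parts of the coefficients leaves a point of the lattice `gp(M)` in the bounded box
`∑ s ∈ S, [0,1] • s`, and a bounded region contains only finitely many lattice points. So
`sn(M) ⊆ n(M) ⊆ F + M` for a finite set `F`. A submonoid `N ⊇ M` lying in finitely many
translates `F + M` is finitely generated: by Dickson's lemma, for each `f ∈ F` the exponent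
vectors `a ∈ ℕ^S` with `f + ∑ a s • s ∈ N` have finitely many minimal elements, and the
corresponding elements of `N` together with `S` generate `N`.
-/

/-- The normalization of a monoid `M` (a submonoid of a `ℚ`-vector space, i.e. a
commutative, cancellative, torsion-free monoid): all elements of the group of
differences `gp(M)` having a positive multiple in `M`. -/
def normalization {V : Type} [AddCommGroup V] [Module ℚ V] (M : AddSubmonoid V) :
    AddSubmonoid V where
  carrier := {x | x ∈ AddSubgroup.closure (M : Set V) ∧ ∃ c : ℕ, 0 < c ∧ c • x ∈ M}
  zero_mem' := ⟨AddSubgroup.zero_mem _, 1, Nat.one_pos, by simpa using M.zero_mem⟩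
  add_mem' := by
    rintro x y ⟨hx, c, hc, hcx⟩ ⟨hy, d, hd, hdy⟩
    refine ⟨AddSubgroup.add_mem _ hx hy, c * d, Nat.mul_pos hc hd, ?_⟩
    rw [smul_add]
    refine AddSubmonoid.add_mem _ ?_ ?_
    · rw [mul_comm, mul_smul]; exact AddSubmonoid.nsmul_mem _ hcx d
    · rw [mul_smul]; exact AddSubmonoid.nsmul_mem _ hdy c

/-- The seminormalization of a monoid `M`: all elements `x` of the group of differences
with `2 • x ∈ M` and `3 • x ∈ M`. -/
def seminormalization {V : Type} [AddCommGroup V] [Module ℚ V] (M : AddSubmonoid V) :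
    AddSubmonoid V where
  carrier := {x | x ∈ AddSubgroup.closure (M : Set V) ∧ (2 : ℕ) • x ∈ M ∧ (3 : ℕ) • x ∈ M}
  zero_mem' := ⟨AddSubgroup.zero_mem _, by simpa using M.zero_mem, by simpa using M.zero_mem⟩
  add_mem' := by
    rintro x y ⟨hx, hx2, hx3⟩ ⟨hy, hy2, hy3⟩
    exact ⟨AddSubgroup.add_mem _ hx hy,
      by rw [smul_add]; exact AddSubmonoid.add_mem _ hx2 hy2,
      by rw [smul_add]; exact AddSubmonoid.add_mem _ hx3 hy3⟩

open Pointwise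

namespace AddSubmonoid

variable {A : Type*} [AddCommMonoid A] {M : AddSubmonoid A}

theorem exists_finite_subset_inter_add_subset_add (hM : M.FG) (X : Set A) {F : Set A}
    (hF : F.Finite) : ∃ G ⊆ X, G.Finite ∧ X ∩ (F + M) ⊆ G + M := by
  obtain ⟨S, rfl⟩ := hM
  set π := Fintype.linearCombination ℕ (Subtype.val : ↥(S : Set A) → A)
  have hπ : ∀ m, m ∈ closure (S : Set A) ↔ ∃ a, π a = m := fun m => by
    have h := Fintype.range_linearCombination ℕ (Subtype.val : ↥(S : Set A) → A)
    rw [Subtype.range_val] at h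
    rw [← Submodule.span_nat_eq_addSubmonoidClosure, Submodule.mem_toAddSubmonoid, ← h]
    rfl
  let U (f : A) := {a | f + π a ∈ X}
  refine ⟨⋃ f ∈ F, (f + π ·) '' {a | Minimal (· ∈ U f) a}, ?_, ?_, ?_⟩
  · simp only [Set.iUnion_subset_iff, Set.image_subset_iff]
    exact fun f _ a ha => ha.prop
  · exact hF.biUnion fun f _ =>
      (WellQuasiOrderedLE.finite_of_isAntichain (setOfPred_minimal_antichain _)).image _
  · rintro _ ⟨hxX, f, hf, _, hm, rfl⟩
    obtain ⟨a, rfl⟩ := (hπ _).1 hm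
    obtain ⟨b, hba, hb⟩ := exists_minimal_le_of_wellFoundedLT (· ∈ U f) a hxX
    refine ⟨f + π b, Set.mem_biUnion hf ⟨b, hb, rfl⟩, π (a - b), (hπ _).2 ⟨_, rfl⟩, ?_⟩
    show f + π b + π (a - b) = f + π a
    rw [add_assoc, ← map_add, add_tsub_cancel_of_le hba]

theorem fg_of_le_of_subset_add {N : AddSubmonoid A} {F : Set A} (hM : M.FG) (hMN : M ≤ N)
    (hF : F.Finite) (hNF : (N : Set A) ⊆ F + M) : N.FG := by
  obtain ⟨G, hGN, hG, hNG⟩ := exists_finite_subset_inter_add_subset_add hM N hF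
  have hN : N = closure G ⊔ M := by
    refine le_antisymm (fun x hx => ?_) (sup_le (closure_le.2 hGN) hMN)
    obtain ⟨g, hg, m, hm, rfl⟩ := hNG ⟨hx, hNF hx⟩
    exact add_mem (mem_sup_left (subset_closure hg)) (mem_sup_right hm)
  rw [hN]
  exact ((fg_iff _).2 ⟨G, rfl, hG⟩).sup hM

end AddSubmonoid

section Rational

variable {V : Type*} [AddCommGroup V] [Module ℚ V]

/-- A `ℤ`-basis of `L` stays `ℚ`-independent in `V`; `φ` extends its coordinate functionals. -/
theorem Submodule.exists_linearMap_injOn_intCast (L : Submodule ℤ V) (hL : L.FG) :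
    ∃ (n : ℕ) (φ : V →ₗ[ℚ] Fin n → ℚ), Set.InjOn φ L ∧ ∀ x ∈ L, ∀ j, ∃ k : ℤ, φ x j = k := by
  have : Module.Finite ℤ L := Module.Finite.iff_fg.mpr hL
  have : Module.IsTorsionFree ℤ V := Module.IsTorsionFree.trans (S := ℤ) (R := ℚ)
  obtain ⟨n, b⟩ := Module.basisOfFiniteTypeTorsionFree' (R := ℤ) (M := L)
  have hind : LinearIndependent ℚ (fun j => (b j : V)) := by
    rw [← LinearIndependent.iff_fractionRing ℤ ℚ]
    exact b.linearIndependent.map' L.subtype L.ker_subtype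
  obtain ⟨φ, hφ⟩ := LinearMap.exists_extend (Finsupp.lcoeFun ∘ₗ hind.repr)
  have hφb : ∀ j, φ (b j) = Pi.single j 1 := fun j => by
    have := congrArg (· ⟨b j, Submodule.subset_span (Set.mem_range_self j)⟩) hφ
    simpa [hind.repr_eq_single j ⟨b j, _⟩ rfl, Finsupp.single_eq_pi_single] using this
  have hφL : ∀ x : L, φ x = fun j => (b.repr x j : ℚ) := fun x => by
    have hx : (x : V) = ∑ i, b.repr x i • (b i : V) := by
      conv_lhs => rw [← b.sum_repr x]
      simp only [Submodule.coe_sum, Submodule.coe_smul]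
    ext j
    simp [hx, hφb, Pi.single_apply]
  refine ⟨n, φ, fun x hx y hy hxy => ?_, fun x hx j => ⟨_, congrFun (hφL ⟨x, hx⟩) j⟩⟩
  have h : b.repr ⟨x, hx⟩ = b.repr ⟨y, hy⟩ := by
    ext j
    exact_mod_cast congrFun ((hφL ⟨x, hx⟩).symm.trans (hxy.trans (hφL ⟨y, hy⟩))) j
  simpa using b.repr.injective h

def unitBox (S : Finset V) : Set V :=
  (fun t : V → ℚ => ∑ v ∈ S, t v • v) '' Set.Icc 0 1

theorem finite_setOf_intCast_abs_le (C : ℚ) : {q : ℚ | (∃ k : ℤ, q = k) ∧ |q| ≤ C}.Finite := by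
  refine ((Set.finite_Icc (-⌈C⌉) ⌈C⌉).image ((↑) : ℤ → ℚ)).subset ?_
  rintro _ ⟨⟨k, rfl⟩, hk⟩
  refine ⟨k, ?_, rfl⟩
  rw [Set.mem_Icc, ← abs_le, ← Int.cast_le (R := ℚ), Int.cast_abs]
  exact hk.trans (Int.le_ceil C)

theorem Submodule.finite_inter_unitBox (L : Submodule ℤ V) (hL : L.FG) (S : Finset V) :
    ((L : Set V) ∩ unitBox S).Finite := by
  obtain ⟨n, φ, hφinj, hφint⟩ := L.exists_linearMap_injOn_intCast hL
  refine Set.Finite.of_finite_image ?_ (hφinj.mono Set.inter_subset_left)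
  refine (Set.Finite.pi (t := fun j => {q : ℚ | (∃ k : ℤ, q = k) ∧ |q| ≤ ∑ v ∈ S, |φ v j|})
    fun j => finite_setOf_intCast_abs_le _).subset ?_
  rintro _ ⟨_, ⟨hzL, t, ht, rfl⟩, rfl⟩ j -
  obtain ⟨k, hk⟩ := hφint _ hzL j
  refine ⟨⟨k, hk⟩, ?_⟩
  simp only [map_sum, map_smul, Finset.sum_apply, Pi.smul_apply, smul_eq_mul]
  refine (Finset.abs_sum_le_sum_abs _ _).trans (Finset.sum_le_sum fun v _ => ?_)
  rw [abs_mul]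
  exact mul_le_of_le_one_left (abs_nonneg _) ((abs_of_nonneg (ht.1 v)).trans_le (ht.2 v))

theorem sum_smul_mem_unitBox_add_closure (S : Finset V) {q : V → ℚ} (hq : 0 ≤ q) :
    ∑ v ∈ S, q v • v ∈ unitBox S + (AddSubmonoid.closure (S : Set V) : Set V) := by
  refine ⟨_, ⟨fun v => q v - ⌊q v⌋₊, ⟨fun v => sub_nonneg.2 (Nat.floor_le (hq v)),
      fun v => ?_⟩, rfl⟩, ∑ v ∈ S, ⌊q v⌋₊ • v,
    sum_mem fun v hv => AddSubmonoid.nsmul_mem _ (AddSubmonoid.subset_closure hv) _, ?_⟩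
  · simp only [Pi.one_apply]
    linarith [Nat.lt_floor_add_one (q v)]
  · simp only [← Finset.sum_add_distrib, sub_smul, ← Nat.cast_smul_eq_nsmul ℚ, sub_add_cancel]

theorem exists_nonneg_sum_smul_eq_of_nsmul_mem_closure {S : Finset V} {x : V} {c : ℕ}
    (hc : 0 < c) (hcx : c • x ∈ AddSubmonoid.closure (S : Set V)) :
    ∃ q : V → ℚ, 0 ≤ q ∧ ∑ v ∈ S, q v • v = x := by
  rw [← Submodule.span_nat_eq_addSubmonoidClosure, Submodule.mem_toAddSubmonoid,
    Submodule.mem_span_finset] at hcx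
  obtain ⟨a, -, ha⟩ := hcx
  refine ⟨fun v => (a v : ℚ) / c, fun v => by positivity, ?_⟩
  have hc' : (c : ℚ) ≠ 0 := by positivity
  apply smul_right_injective V hc'
  simp only [Finset.smul_sum, smul_smul, mul_div_cancel₀ _ hc', Nat.cast_smul_eq_nsmul, ha]

end Rational

section Normalization

variable {V : Type} [AddCommGroup V] [Module ℚ V]

theorem le_normalization (M : AddSubmonoid V) : M ≤ normalization M :=
  fun m hm => ⟨AddSubgroup.subset_closure hm, 1, one_pos, by simpa using hm⟩

theorem le_seminormalization (M : AddSubmonoid V) : M ≤ seminormalization M :=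
  fun _ hm => ⟨AddSubgroup.subset_closure hm, M.nsmul_mem hm 2, M.nsmul_mem hm 3⟩

theorem seminormalization_le_normalization (M : AddSubmonoid V) :
    seminormalization M ≤ normalization M :=
  fun _ ⟨hx, h2, _⟩ => ⟨hx, 2, two_pos, h2⟩

theorem normalization_subset_add {M : AddSubmonoid V} {S : Finset V}
    (hS : AddSubmonoid.closure (S : Set V) = M) :
    (normalization M : Set V) ⊆ ((Submodule.span ℤ (S : Set V) : Set V) ∩ unitBox S) + M := by
  rintro x ⟨hxG, c, hc, hcx⟩
  have hMS : M ≤ (Submodule.span ℤ (S : Set V)).toAddSubmonoid :=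
    hS ▸ AddSubmonoid.closure_le.2 Submodule.subset_span
  have hxS : x ∈ Submodule.span ℤ (S : Set V) :=
    (AddSubgroup.closure_le (Submodule.span ℤ (S : Set V)).toAddSubgroup).2 hMS hxG
  rw [← hS] at hcx
  obtain ⟨q, hq, rfl⟩ := exists_nonneg_sum_smul_eq_of_nsmul_mem_closure hc hcx
  obtain ⟨z, hz, y, hy, hzy⟩ := sum_smul_mem_unitBox_add_closure S hq
  rw [hS] at hy
  refine ⟨z, ⟨?_, hz⟩, y, hy, hzy⟩
  rw [eq_sub_of_add_eq hzy]
  exact sub_mem hxS (hMS hy)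

end Normalization

/-- Normalization and seminormalization preserve finite generation. -/
theorem stmt2 {V : Type} [AddCommGroup V] [Module ℚ V] (M : AddSubmonoid V) (hFG : M.FG) :
    (normalization M).FG ∧ (seminormalization M).FG := by
  obtain ⟨S, hS⟩ := id hFG
  have hbox := (Submodule.span ℤ (S : Set V)).finite_inter_unitBox ⟨S, rfl⟩ S
  have hN := normalization_subset_add hS
  exact ⟨AddSubmonoid.fg_of_le_of_subset_add hFG (le_normalization M) hbox hN,
    AddSubmonoid.fg_of_le_of_subset_add hFG (le_seminormalization M) hbox
      ((SetLike.coe_subset_coe.2 (seminormalization_le_normalization M)).trans hN)⟩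
end

section
/- Let M be a finitely generated normal monoid with trivial group of units, E an edge (1-dimensional face) of the cone C(M), and t the unique generator of E ∩ M ≅ Z_+. Then the monoid Z_+(−t) + M (inside gp(M)) is isomorphic to Z × N for some finitely generated normal monoid N with rank N = rank M − 1 and trivial group of units. -/
/-- Componentwise inclusion `ℚ^r → ℝ^r`. -/
def toR {r : ℕ} (v : Fin r → ℚ) : Fin r → ℝ := fun i => (v i : ℝ)

/-- The cone `ℝ₊ s` spanned by a subset `s ⊆ ℝ^r`. -/
def coneOf {r : ℕ} (s : Set (Fin r → ℝ)) : Set (Fin r → ℝ) :=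
  {x | ∃ (n : ℕ) (cc : Fin n → ℝ) (w : Fin n → Fin r → ℝ),
    (∀ i, 0 ≤ cc i) ∧ (∀ i, w i ∈ s) ∧ x = ∑ i, cc i • w i}

/-- Normality of a set of monoid elements, with respect to its group of differences. -/
def IsNormalSet {r : ℕ} (s : Set (Fin r → ℚ)) : Prop :=
  ∀ x ∈ AddSubgroup.closure s, (∃ c : ℕ, 0 < c ∧ c • x ∈ s) → x ∈ s

/-- `F` is a face of the cone `C`. -/
def IsFaceOfCone {r : ℕ} (C F : Set (Fin r → ℝ)) : Prop :=
  F ⊆ C ∧ ∀ x ∈ C, ∀ y ∈ C, x + y ∈ F → x ∈ F ∧ y ∈ F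

-- cancellation of smul by t
lemma aux_tcancel {r : ℕ} {t : Fin r → ℚ} (ht0 : t ≠ 0) {a b : ℤ} (h : a • t = b • t) :
    a = b := by
  have h2 : ((a : ℚ) - b) • t = 0 := by
    rw [sub_smul, Int.cast_smul_eq_zsmul, Int.cast_smul_eq_zsmul, h, sub_self]
  rcases smul_eq_zero.1 h2 with h3 | h3
  · exact_mod_cast sub_eq_zero.1 (by exact_mod_cast h3)
  · exact absurd h3 ht0

-- clearing denominators: a member of the ℚ-span has a positive multiple in the ℤ-closure
lemma aux_denom {r : ℕ} (s : Set (Fin r → ℚ)) (x : Fin r → ℚ)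
    (hx : x ∈ Submodule.span ℚ s) :
    ∃ c : ℕ, 0 < c ∧ (c : ℤ) • x ∈ AddSubgroup.closure s := by
  induction hx using Submodule.span_induction with
  | mem y hy => exact ⟨1, one_pos, by simpa using AddSubgroup.subset_closure hy⟩
  | zero => exact ⟨1, one_pos, by simpa using zero_mem (AddSubgroup.closure s)⟩
  | add y z _ _ hy hz =>
      obtain ⟨c, hc, hcy⟩ := hy
      obtain ⟨d, hd, hdz⟩ := hz
      refine ⟨c * d, Nat.mul_pos hc hd, ?_⟩
      have : ((c * d : ℕ) : ℤ) • (y + z) = (d : ℤ) • ((c : ℤ) • y) + (c : ℤ) • ((d : ℤ) • z) := by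
        push_cast
        rw [smul_add, smul_smul, smul_smul]
        ring_nf
      rw [this]
      exact add_mem (AddSubgroup.zsmul_mem _ hcy _) (AddSubgroup.zsmul_mem _ hdz _)
  | smul q y _ hy =>
      obtain ⟨c, hc, hcy⟩ := hy
      refine ⟨c * q.den, Nat.mul_pos hc q.pos, ?_⟩
      have : ((c * q.den : ℕ) : ℤ) • (q • y) = q.num • ((c : ℤ) • y) := by
        rw [← Int.cast_smul_eq_zsmul ℚ, ← Int.cast_smul_eq_zsmul ℚ (q.num),
          ← Int.cast_smul_eq_zsmul ℚ (c : ℤ), smul_smul, smul_smul]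
        congr 1
        have hq : (q.den : ℚ) * q = q.num := by
          rw [mul_comm]
          exact_mod_cast Rat.mul_den_eq_num q
        push_cast
        rw [← hq]
        ring
      rw [this]
      exact AddSubgroup.zsmul_mem _ hcy _


/-- Let `M` be a finitely generated normal monoid with trivial units, `E = ℝ₊t` an
edge of `C(M)` with `t` the generator of `E ∩ M ≅ ℤ₊`. Then
`ℤ₊(−t) + M ≅ ℤ × N` for some finitely generated normal monoid `N` with trivial
units and `rank N = rank M − 1`. -/
theorem stmt7 {r : ℕ} (M : AddSubmonoid (Fin r → ℚ)) (hFG : M.FG)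
    (hnormal : IsNormalSet (M : Set (Fin r → ℚ)))
    (hpointed : ∀ x ∈ M, -x ∈ M → x = 0)
    (t : Fin r → ℚ) (ht : t ∈ M) (ht0 : t ≠ 0)
    (hedge : IsFaceOfCone (coneOf (toR '' (M : Set (Fin r → ℚ))))
      {x | ∃ cc : ℝ, 0 ≤ cc ∧ x = cc • toR t})
    (hgen : ∀ x ∈ M, (∃ cc : ℝ, 0 ≤ cc ∧ toR x = cc • toR t) → ∃ n : ℕ, x = n • t) :
    ∃ N : AddSubmonoid (Fin r → ℚ), N.FG ∧ IsNormalSet (N : Set (Fin r → ℚ)) ∧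
      (∀ x ∈ N, -x ∈ N → x = 0) ∧
      Module.finrank ℚ (Submodule.span ℚ (N : Set (Fin r → ℚ))) + 1
        = Module.finrank ℚ (Submodule.span ℚ (M : Set (Fin r → ℚ))) ∧
      Nonempty ((AddSubmonoid.closure ((M : Set (Fin r → ℚ)) ∪ {-t})) ≃+ (ℤ × N)) := by
  classical
  set G : AddSubgroup (Fin r → ℚ) := AddSubgroup.closure (M : Set (Fin r → ℚ)) with hGdef
  have hMG : ∀ x ∈ M, x ∈ G := fun x hx => AddSubgroup.subset_closure hx
  have htG : t ∈ G := hMG t ht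
  -- purity: any rational multiple of t lying in G is an integer multiple of t
  have hpure0 : ∀ x ∈ G, ∀ q : ℚ, 0 ≤ q → x = q • t → ∃ n : ℕ, x = n • t := by
    intro x hx q hq hxq
    have hden : (q.den : ℚ) • x = (q.num.toNat : ℚ) • t := by
      rw [hxq, smul_smul]
      congr 1
      have h1 : ((q.num.toNat : ℕ) : ℚ) = (q.num : ℚ) := by
        exact_mod_cast congrArg (fun z : ℤ => (z : ℚ)) (Int.toNat_of_nonneg (Rat.num_nonneg.2 hq))
      rw [h1, mul_comm]
      exact_mod_cast Rat.mul_den_eq_num q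
    have hcx : (q.den : ℕ) • x ∈ M := by
      have : (q.den : ℕ) • x = q.num.toNat • t := by
        rw [← Nat.cast_smul_eq_nsmul ℚ, ← Nat.cast_smul_eq_nsmul ℚ q.num.toNat]
        exact hden
      rw [this]
      exact AddSubmonoid.nsmul_mem M ht _
    have hxM : x ∈ M := hnormal x hx ⟨q.den, q.pos, hcx⟩
    refine hgen x hxM ⟨(q : ℝ), by exact_mod_cast hq, ?_⟩
    funext i
    simp only [toR, hxq, Pi.smul_apply, smul_eq_mul]
    push_cast
    ring
  have hpure : ∀ x ∈ G, ∀ q : ℚ, x = q • t → ∃ m : ℤ, x = m • t := by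
    intro x hx q hxq
    rcases le_or_gt 0 q with hq | hq
    · obtain ⟨n, hn⟩ := hpure0 x hx q hq hxq
      exact ⟨n, by rw [hn, natCast_zsmul]⟩
    · obtain ⟨n, hn⟩ := hpure0 (-x) (neg_mem hx) (-q) (by linarith) (by rw [hxq, neg_smul])
      refine ⟨-n, ?_⟩
      have : x = -((n : ℕ) • t) := by rw [← hn]; ring_nf
      rw [this, neg_smul, natCast_zsmul]
  -- G is finitely generated
  obtain ⟨S, hS⟩ := hFG
  have hGS : G = AddSubgroup.closure (S : Set (Fin r → ℚ)) := by
    apply le_antisymm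
    · rw [hGdef]
      apply AddSubgroup.closure_le _ |>.2
      intro x hx
      have : x ∈ AddSubmonoid.closure (S : Set (Fin r → ℚ)) := by rw [hS]; exact hx
      refine AddSubmonoid.closure_induction (fun y hy => AddSubgroup.subset_closure hy)
        (zero_mem _) (fun y z _ _ hy hz => add_mem hy hz) this
    · apply AddSubgroup.closure_le _ |>.2
      intro x hx
      exact hMG x (by rw [← hS]; exact AddSubmonoid.subset_closure hx)
  have hGfg : G.FG := by
    rw [hGS]
    exact ⟨S, rfl⟩
  haveI : AddGroup.FG G := (AddGroup.fg_iff_addSubgroup_fg G).2 hGfg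
  haveI : Module.Finite ℤ G := Module.Finite.iff_addGroup_fg.2 ‹_›
  set tG : G := ⟨t, htG⟩ with htGdef
  set T : Submodule ℤ G := Submodule.span ℤ {tG} with hTdef
  haveI : NoZeroSMulDivisors ℤ (G ⧸ T) := by
    constructor
    intro c x hcx
    by_cases hc : c = 0
    · exact Or.inl hc
    right
    obtain ⟨g, rfl⟩ := Submodule.Quotient.mk_surjective T x
    rw [← Submodule.Quotient.mk_smul, Submodule.Quotient.mk_eq_zero] at hcx
    obtain ⟨k, hk⟩ := Submodule.mem_span_singleton.1 hcx
    have hkk : c • (g : Fin r → ℚ) = k • t := by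
      have := congrArg (fun z : G => (z : Fin r → ℚ)) hk
      simpa using this.symm
    have hgq : (g : Fin r → ℚ) = ((k : ℚ) / (c : ℚ)) • t := by
      have hc' : (c : ℚ) ≠ 0 := Int.cast_ne_zero.2 hc
      have : (c : ℚ) • (g : Fin r → ℚ) = (k : ℚ) • t := by
        rw [Int.cast_smul_eq_zsmul, Int.cast_smul_eq_zsmul]
        exact hkk
      rw [div_eq_inv_mul, mul_smul, ← this, inv_smul_smul₀ hc']
    obtain ⟨m, hm⟩ := hpure (g : Fin r → ℚ) g.2 _ hgq
    rw [Submodule.Quotient.mk_eq_zero]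
    exact Submodule.mem_span_singleton.2 ⟨m, Subtype.ext (by
      rw [AddSubgroupClass.coe_zsmul]; exact hm.symm)⟩
  haveI : Module.Free ℤ (G ⧸ T) := Module.free_of_finite_type_torsion_free'
  obtain ⟨s, hs⟩ := Module.projective_lifting_property T.mkQ (LinearMap.id)
    (Submodule.mkQ_surjective T)
  have hsq : ∀ q : G ⧸ T, T.mkQ (s q) = q := by
    intro q
    exact congrArg (fun f : G ⧸ T →ₗ[ℤ] G ⧸ T => f q) hs
  have key : ∀ g : G, ∃ k : ℤ, (g : Fin r → ℚ)
      = k • t + ((s (T.mkQ g) : G) : Fin r → ℚ) := by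
    intro g
    have h0 : T.mkQ (g - s (T.mkQ g)) = 0 := by
      rw [map_sub, hsq, sub_self]
    have h1 : g - s (T.mkQ g) ∈ T := by
      rwa [Submodule.mkQ_apply, Submodule.Quotient.mk_eq_zero] at h0
    obtain ⟨k, hk⟩ := Submodule.mem_span_singleton.1 h1
    refine ⟨k, ?_⟩
    have := congrArg (fun z : G => (z : Fin r → ℚ)) hk
    simp only [AddSubgroupClass.coe_zsmul] at this ⊢
    simp only [AddSubgroupClass.coe_sub] at this
    have h2 : (g : Fin r → ℚ) - ((s (T.mkQ g) : G) : Fin r → ℚ) = k • t := this.symm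
    linear_combination (norm := module) h2
  choose ψ hψ using key
  set ψ' : (Fin r → ℚ) → ℤ := fun x => if h : x ∈ G then ψ ⟨x, h⟩ else 0 with hψ'def
  set ρ : (Fin r → ℚ) → (Fin r → ℚ) :=
    fun x => if h : x ∈ G then ((s (T.mkQ ⟨x, h⟩) : G) : Fin r → ℚ) else 0 with hρdef
  have hdecomp : ∀ x, ∀ h : x ∈ G, x = ψ' x • t + ρ x := by
    intro x h
    simp only [hψ'def, hρdef, dif_pos h]
    exact hψ ⟨x, h⟩
  have hρadd : ∀ x ∈ G, ∀ y ∈ G, ρ (x + y) = ρ x + ρ y := by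
    intro x hx y hy
    simp only [hρdef, dif_pos hx, dif_pos hy, dif_pos (add_mem hx hy)]
    have : (⟨x + y, add_mem hx hy⟩ : G) = ⟨x, hx⟩ + ⟨y, hy⟩ := rfl
    rw [this, map_add, map_add]
    rfl
  have hψadd : ∀ x ∈ G, ∀ y ∈ G, ψ' (x + y) = ψ' x + ψ' y := by
    intro x hx y hy
    apply aux_tcancel ht0
    have e1 := hdecomp x hx
    have e2 := hdecomp y hy
    have e3 := hdecomp (x + y) (add_mem hx hy)
    rw [hρadd x hx y hy] at e3
    rw [add_smul]
    linear_combination (norm := module) e1 + e2 - e3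
  have hψzt : ∀ k : ℤ, ψ' (k • t) = k := by
    intro k
    have hkG : (k • t : Fin r → ℚ) ∈ G := zsmul_mem htG k
    apply aux_tcancel ht0
    have e := hdecomp (k • t) hkG
    have hρ0 : ρ (k • t) = 0 := by
      simp only [hρdef, dif_pos hkG]
      have h1 : (⟨k • t, hkG⟩ : G) = k • tG := Subtype.ext (by
        rw [AddSubgroupClass.coe_zsmul])
      have h2 : T.mkQ (k • tG) = 0 := by
        rw [Submodule.mkQ_apply, Submodule.Quotient.mk_eq_zero]
        exact Submodule.mem_span_singleton.2 ⟨k, rfl⟩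
      rw [h1, h2, map_zero]
      rfl
    rw [hρ0, add_zero] at e
    exact e.symm
  have hψ0 : ψ' 0 = 0 := by simpa using hψzt 0
  have hψt : ψ' t = 1 := by simpa using hψzt 1
  have hψneg : ∀ x ∈ G, ψ' (-x) = -ψ' x := by
    intro x hx
    have := hψadd x hx (-x) (neg_mem hx)
    rw [add_neg_cancel, hψ0] at this
    omega
  -- the monoid ℤ₊(-t) + M
  set M' : AddSubmonoid (Fin r → ℚ) :=
    AddSubmonoid.closure ((M : Set (Fin r → ℚ)) ∪ {-t}) with hM'def
  have hMM' : ∀ x ∈ M, x ∈ M' := fun x hx =>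
    AddSubmonoid.subset_closure (Or.inl hx)
  have hntM' : (-t) ∈ M' := AddSubmonoid.subset_closure (Or.inr rfl)
  have hM'G : ∀ x ∈ M', x ∈ G := by
    intro x hx
    refine AddSubmonoid.closure_induction ?_ (zero_mem _)
      (fun y z _ _ hy hz => add_mem hy hz) hx
    rintro y (hy | rfl)
    · exact hMG y hy
    · exact neg_mem htG
  have hM'mem : ∀ x, x ∈ M' ↔ ∃ m ∈ M, ∃ k : ℕ, x = m - k • t := by
    intro x
    constructor
    · intro hx
      refine AddSubmonoid.closure_induction ?_ ⟨0, zero_mem M, 0, by simp⟩ ?_ hx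
      · rintro y (hy | rfl)
        · exact ⟨y, hy, 0, by simp⟩
        · exact ⟨0, zero_mem M, 1, by simp⟩
      · rintro y z _ _ ⟨m, hm, k, rfl⟩ ⟨m', hm', k', rfl⟩
        exact ⟨m + m', add_mem hm hm', k + k', by rw [add_smul]; ring⟩
    · rintro ⟨m, hm, k, rfl⟩
      have : m - k • t = m + k • (-t) := by rw [smul_neg]; ring
      rw [this]
      exact add_mem (hMM' m hm) (AddSubmonoid.nsmul_mem M' hntM' k)
  have hM'zt : ∀ x ∈ M', ∀ k : ℤ, x + k • t ∈ M' := by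
    intro x hx k
    rcases le_or_gt 0 k with hk | hk
    · have : x + k • t = x + k.toNat • t := by
        rw [← natCast_zsmul, Int.toNat_of_nonneg hk]
      rw [this]
      exact add_mem hx (AddSubmonoid.nsmul_mem M' (hMM' t ht) _)
    · have : x + k • t = x + (-k).toNat • (-t) := by
        rw [← natCast_zsmul, smul_neg, Int.toNat_of_nonneg (by omega), neg_smul, neg_neg]
      rw [this]
      exact add_mem hx (AddSubmonoid.nsmul_mem M' hntM' _)
  have hψsub : ∀ x ∈ G, ∀ k : ℤ, ψ' (x - k • t) = ψ' x - k := by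
    intro x hx k
    have h1 : x - k • t = x + (-k) • t := by rw [neg_smul]; ring
    rw [h1, hψadd x hx _ (zsmul_mem htG _), hψzt]
    ring
  have hpM' : ∀ x ∈ M', x - ψ' x • t ∈ M' := by
    intro x hx
    have : x - ψ' x • t = x + (-ψ' x) • t := by rw [neg_smul]; ring
    rw [this]
    exact hM'zt x hx _
  have hψpM' : ∀ x ∈ M', ψ' (x - ψ' x • t) = 0 := by
    intro x hx
    rw [hψsub x (hM'G x hx), sub_self]
  -- the complement monoid N
  set N : AddSubmonoid (Fin r → ℚ) :=
    { carrier := {x | x ∈ M' ∧ ψ' x = 0}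
      zero_mem' := ⟨zero_mem M', hψ0⟩
      add_mem' := by
        rintro a b ⟨ha, ha0⟩ ⟨hb, hb0⟩
        exact ⟨add_mem ha hb, by
          rw [hψadd a (hM'G a ha) b (hM'G b hb), ha0, hb0]; ring⟩ } with hNdef
  have hNmem : ∀ x, x ∈ N ↔ x ∈ M' ∧ ψ' x = 0 := fun x => Iff.rfl
  have hM'S : M' = AddSubmonoid.closure ((S : Set (Fin r → ℚ)) ∪ {-t}) := by
    apply le_antisymm
    · rw [hM'def]
      apply AddSubmonoid.closure_le.2
      rintro y (hy | rfl)
      · have : y ∈ AddSubmonoid.closure (S : Set (Fin r → ℚ)) := by rw [hS]; exact hy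
        exact AddSubmonoid.closure_mono Set.subset_union_left this
      · exact AddSubmonoid.subset_closure (Or.inr rfl)
    · apply AddSubmonoid.closure_le.2
      rintro y (hy | rfl)
      · exact hMM' y (by rw [← hS]; exact AddSubmonoid.subset_closure hy)
      · exact hntM'
  refine ⟨N, ?_, ?_, ?_, ?_, ?_⟩
  · -- finite generation
    set img : Set (Fin r → ℚ) :=
      (fun x => x - ψ' x • t) '' ((S : Set (Fin r → ℚ)) ∪ {-t}) with himgdef
    have hSM' : ∀ y ∈ (S : Set (Fin r → ℚ)) ∪ {-t}, y ∈ M' := by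
      rintro y (hy | rfl)
      · exact hMM' y (by rw [← hS]; exact AddSubmonoid.subset_closure hy)
      · exact hntM'
    have claim : ∀ x ∈ M', x - ψ' x • t ∈ AddSubmonoid.closure img := by
      intro x hx
      rw [hM'S] at hx
      refine AddSubmonoid.closure_induction ?_ ?_ ?_ hx
      · intro y hy
        exact AddSubmonoid.subset_closure ⟨y, hy, rfl⟩
      · rw [hψ0, zero_smul, sub_zero]
        exact zero_mem _
      · intro y z hy' hz' hyc hzc
        have hyG : y ∈ G := hM'G y (by rw [hM'S]; exact hy')
        have hzG : z ∈ G := hM'G z (by rw [hM'S]; exact hz')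
        have : (y + z) - ψ' (y + z) • t = (y - ψ' y • t) + (z - ψ' z • t) := by
          rw [hψadd y hyG z hzG, add_smul]
          ring
        rw [this]
        exact add_mem hyc hzc
    have hNimg : N = AddSubmonoid.closure img := by
      apply le_antisymm
      · intro x hx
        obtain ⟨hxM', hx0⟩ := hNmem x |>.1 hx
        have := claim x hxM'
        rwa [hx0, zero_smul, sub_zero] at this
      · apply AddSubmonoid.closure_le.2
        rintro y ⟨g, hg, rfl⟩
        exact (hNmem _).2 ⟨hpM' g (hSM' g hg), hψpM' g (hSM' g hg)⟩
    rw [AddSubmonoid.fg_iff]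
    exact ⟨img, hNimg.symm, ((S.finite_toSet.union (Set.finite_singleton _)).image _)⟩
  · -- normality
    rintro x hxcl ⟨c, hc, hcx⟩
    have hxG : x ∈ G ∧ ψ' x = 0 := by
      refine AddSubgroup.closure_induction ?_ ⟨zero_mem G, hψ0⟩ ?_ ?_ hxcl
      · intro y hy
        obtain ⟨hyM', hy0⟩ := (hNmem y).1 hy
        exact ⟨hM'G y hyM', hy0⟩
      · rintro y z _ _ ⟨hyG, hy0⟩ ⟨hzG, hz0⟩
        exact ⟨add_mem hyG hzG, by rw [hψadd y hyG z hzG, hy0, hz0]; ring⟩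
      · rintro y _ ⟨hyG, hy0⟩
        exact ⟨neg_mem hyG, by rw [hψneg y hyG, hy0]; ring⟩
    obtain ⟨hcxM', -⟩ := (hNmem _).1 hcx
    obtain ⟨m, hm, k, hmk⟩ := (hM'mem _).1 hcxM'
    have hck : c * k = (c * k - k) + k := by
      have : k ≤ c * k := Nat.le_mul_of_pos_left k hc
      omega
    have hy : c • (x + k • t) ∈ (M : Set (Fin r → ℚ)) := by
      have h1 : c • (x + k • t) = m + (c * k - k) • t := by
        rw [smul_add, hmk, smul_smul]
        have h4 : (c * k) • t = k • t + (c * k - k) • t := by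
          rw [← add_smul]
          congr 1
          omega
        rw [h4]
        abel
      rw [h1]
      exact add_mem hm (AddSubmonoid.nsmul_mem M ht _)
    have hyM : x + k • t ∈ M :=
      hnormal _ (add_mem hxG.1 (nsmul_mem htG k)) ⟨c, hc, hy⟩
    have hxM' : x ∈ M' := by
      have h2 := hM'zt _ (hMM' _ hyM) (-(k : ℤ))
      have h3 : (x + k • t) + (-(k : ℤ)) • t = x := by
        rw [neg_smul, natCast_zsmul]
        abel
      rwa [h3] at h2
    exact (hNmem x).2 ⟨hxM', hxG.2⟩
  · -- pointedness
    rintro x hxN hnxN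
    obtain ⟨hxM', hx0⟩ := (hNmem x).1 hxN
    obtain ⟨hnxM', -⟩ := (hNmem (-x)).1 hnxN
    obtain ⟨m, hm, k, hmk⟩ := (hM'mem x).1 hxM'
    obtain ⟨m', hm', k', hmk'⟩ := (hM'mem (-x)).1 hnxM'
    have hzero : (m - k • t) + (m' - k' • t) = 0 := by
      rw [← hmk, ← hmk', add_neg_cancel]
    have hsum : m + m' = (k + k') • t := by
      calc m + m' = ((m - k • t) + (m' - k' • t)) + (k • t + k' • t) := by abel
        _ = k • t + k' • t := by rw [hzero, zero_add]
        _ = (k + k') • t := (add_smul k k' t).symm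
    have hconem : ∀ z ∈ M, toR z ∈ coneOf (toR '' (M : Set (Fin r → ℚ))) := by
      intro z hz
      refine ⟨1, fun _ => 1, fun _ => toR z, fun _ => zero_le_one, fun _ => ⟨z, hz, rfl⟩, ?_⟩
      simp
    have htRsum : toR m + toR m' = ((k + k' : ℕ) : ℝ) • toR t := by
      funext i
      have h1 := congrFun hsum i
      simp only [Pi.add_apply, Pi.smul_apply, nsmul_eq_mul] at h1
      simp only [toR, Pi.add_apply, Pi.smul_apply, smul_eq_mul]
      exact_mod_cast congrArg (fun q : ℚ => (q : ℝ)) h1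
    have hmface := (hedge.2 (toR m) (hconem m hm) (toR m') (hconem m' hm')
      ⟨((k + k' : ℕ) : ℝ), by positivity, htRsum⟩).1
    obtain ⟨n, hn⟩ := hgen m hm hmface
    have hx : x = ((n : ℤ) - k) • t := by
      rw [hmk, hn, sub_smul, natCast_zsmul, natCast_zsmul]
    have h2 : ψ' x = (n : ℤ) - k := by rw [hx, hψzt]
    have h0 : (n : ℤ) - k = 0 := by rw [← h2, hx0]
    rw [hx, h0, zero_smul]
  · -- rank
    have hclN : ∀ y ∈ AddSubgroup.closure (N : Set (Fin r → ℚ)), y ∈ G ∧ ψ' y = 0 := by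
      intro y hy
      refine AddSubgroup.closure_induction ?_ ⟨zero_mem G, hψ0⟩ ?_ ?_ hy
      · intro z hz
        obtain ⟨hzM', hz0⟩ := (hNmem z).1 hz
        exact ⟨hM'G z hzM', hz0⟩
      · rintro z w _ _ ⟨hzG, hz0⟩ ⟨hwG, hw0⟩
        exact ⟨add_mem hzG hwG, by rw [hψadd z hzG w hwG, hz0, hw0]; ring⟩
      · rintro z _ ⟨hzG, hz0⟩
        exact ⟨neg_mem hzG, by rw [hψneg z hzG, hz0]; ring⟩
    set W := Submodule.span ℚ (N : Set (Fin r → ℚ)) with hWdef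
    set V := Submodule.span ℚ (M : Set (Fin r → ℚ)) with hVdef
    set Tt := Submodule.span ℚ ({t} : Set (Fin r → ℚ)) with hTtdef
    have htW : t ∉ W := by
      intro htW
      obtain ⟨c, hc, hct⟩ := aux_denom _ t htW
      have h1 := (hclN _ hct).2
      rw [hψzt] at h1
      omega
    have hWV : W ≤ V := by
      rw [hWdef, hVdef]
      apply Submodule.span_le.2
      intro y hy
      obtain ⟨hyM', -⟩ := (hNmem y).1 hy
      obtain ⟨m, hm, k, rfl⟩ := (hM'mem y).1 hyM'
      rw [SetLike.mem_coe]
      refine sub_mem (Submodule.subset_span hm) ?_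
      rw [← Nat.cast_smul_eq_nsmul ℚ]
      exact Submodule.smul_mem _ _ (Submodule.subset_span ht)
    have hTtV : Tt ≤ V := by
      rw [hTtdef, hVdef]
      exact Submodule.span_le.2 (Set.singleton_subset_iff.2 (Submodule.subset_span ht))
    have hsup : W ⊔ Tt = V := by
      refine le_antisymm (sup_le hWV hTtV) ?_
      rw [hVdef]
      apply Submodule.span_le.2
      intro m hm
      have hmM' : m ∈ M' := hMM' m hm
      have h1 : m - ψ' m • t ∈ N := (hNmem _).2 ⟨hpM' m hmM', hψpM' m hmM'⟩
      have h2 : m = (m - ψ' m • t) + ψ' m • t := (sub_add_cancel m _).symm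
      rw [SetLike.mem_coe, h2]
      refine add_mem (Submodule.mem_sup_left (Submodule.subset_span h1))
        (Submodule.mem_sup_right ?_)
      rw [← Int.cast_smul_eq_zsmul ℚ]
      exact Submodule.smul_mem _ _ (Submodule.mem_span_singleton_self t)
    have hinf : W ⊓ Tt = ⊥ := by
      rw [eq_bot_iff]
      intro v hv
      obtain ⟨hvW, hvT⟩ := Submodule.mem_inf.1 hv
      obtain ⟨q, rfl⟩ := Submodule.mem_span_singleton.1 hvT
      rcases eq_or_ne q 0 with rfl | hq
      · simp
      · have h := Submodule.smul_mem W q⁻¹ hvW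
        rw [inv_smul_smul₀ hq] at h
        exact absurd h htW
    have hfr := Submodule.finrank_sup_add_finrank_inf_eq W Tt
    rw [hsup, hinf, finrank_bot, add_zero, finrank_span_singleton ht0] at hfr
    omega
  · -- the isomorphism with ℤ × N
    refine ⟨AddEquiv.mk' ⟨fun x => (ψ' x.1,
        ⟨x.1 - ψ' x.1 • t, (hNmem _).2 ⟨hpM' x.1 x.2, hψpM' x.1 x.2⟩⟩),
      fun p => ⟨(p.2 : Fin r → ℚ) + p.1 • t, hM'zt _ ((hNmem _).1 p.2.2).1 p.1⟩,
      ?_, ?_⟩ ?_⟩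
    · intro x
      exact Subtype.ext (sub_add_cancel x.1 _)
    · intro p
      have hpG : (p.2 : Fin r → ℚ) ∈ G := hM'G _ ((hNmem _).1 p.2.2).1
      have h1 : ψ' ((p.2 : Fin r → ℚ) + p.1 • t) = p.1 := by
        rw [hψadd _ hpG _ (zsmul_mem htG p.1), ((hNmem _).1 p.2.2).2, hψzt, zero_add]
      refine Prod.ext h1 (Subtype.ext ?_)
      show ((p.2 : Fin r → ℚ) + p.1 • t) - ψ' ((p.2 : Fin r → ℚ) + p.1 • t) • t
        = (p.2 : Fin r → ℚ)
      rw [h1]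
      exact add_sub_cancel_right _ _
    · intro x y
      refine Prod.ext (hψadd x.1 (hM'G _ x.2) y.1 (hM'G _ y.2)) (Subtype.ext ?_)
      show (x.1 + y.1) - ψ' (x.1 + y.1) • t = (x.1 - ψ' x.1 • t) + (y.1 - ψ' y.1 • t)
      rw [hψadd x.1 (hM'G _ x.2) y.1 (hM'G _ y.2), add_smul]
      abel
end

section
/- Let k be a field and consider vector bundles on the projective line P^1_k. If O(u_1) ⊕ ⋯ ⊕ O(u_n) ≅ O(v_1) ⊕ ⋯ ⊕ O(v_m) as O_{P^1}-modules, then n = m and the integer sequences (u_1,...,u_n) and (v_1,...,v_m) coincide up to permutation. -/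
/-!
On the chart `k[t]` the isomorphism is a matrix `A`, on the chart `k[t⁻¹]` a matrix `B`, and
gluing gives `Aᵢⱼ = t^{vᵢ - uⱼ} Bᵢⱼ`. A polynomial in `t` that is `t^{-e}` (`e > 0`) times a
polynomial in `t⁻¹` vanishes, so `Aᵢⱼ = 0` whenever `vᵢ < uⱼ`, and symmetrically for the inverse
`A'`. Hence for every `d`, `A` maps the coordinates `uⱼ ≥ d` into the coordinates `vᵢ ≥ d` and
`A'` does the converse; since `A` is invertible over the commutative ring `k[t, t⁻¹]`, this forces
`#{j | uⱼ ≥ d} = #{i | vᵢ ≥ d}` for all `d`, which determines `u` and `v` up to permutation.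
-/

open LaurentPolynomial

/-- The inclusion `k[t] → k[t, t⁻¹]`, `t ↦ T`. -/
noncomputable def posHom (k : Type) [Field k] : Polynomial k →+* LaurentPolynomial k :=
  Polynomial.eval₂RingHom LaurentPolynomial.C (T 1)

/-- The inclusion `k[t⁻¹] → k[t, t⁻¹]`, sending the variable to `T⁻¹`. -/
noncomputable def negHom (k : Type) [Field k] : Polynomial k →+* LaurentPolynomial k :=
  Polynomial.eval₂RingHom LaurentPolynomial.C (T (-1))

namespace LaurentPolynomial

variable {R : Type*} [Semiring R]

lemma coeff_T_mul (d z : ℤ) (f : R[T;T⁻¹]) : (T d * f).coeff z = f.coeff (z - d) := by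
  rw [T, AddMonoidAlgebra.coeff_single_mul_apply, one_mul, neg_add_eq_sub]

lemma coeff_mul_T (d z : ℤ) (f : R[T;T⁻¹]) : (f * T d).coeff z = f.coeff (z - d) := by
  rw [T, AddMonoidAlgebra.coeff_mul_single_apply, mul_one, sub_eq_add_neg]

end LaurentPolynomial

section Charts

variable {k : Type} [Field k]

lemma posHom_eq_toLaurent : posHom k = Polynomial.toLaurent := by
  apply Polynomial.ringHom_ext <;> simp [posHom]

lemma negHom_eq_invert_comp_posHom :
    negHom k = (invert : k[T;T⁻¹] ≃ₐ[k] k[T;T⁻¹]).toRingHom.comp (posHom k) := by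
  apply Polynomial.ringHom_ext <;> simp [negHom, posHom]

lemma coeff_posHom_of_neg (p : Polynomial k) {z : ℤ} (hz : z < 0) :
    (posHom k p).coeff z = 0 := by
  rw [posHom_eq_toLaurent, coeff_toLaurent]
  refine Finsupp.mapDomain_of_notMem_range _ _ ?_
  rintro ⟨n, rfl⟩
  exact (Int.natCast_nonneg n).not_gt hz

lemma coeff_negHom_of_pos (p : Polynomial k) {z : ℤ} (hz : 0 < z) :
    (negHom k p).coeff z = 0 := by
  rw [negHom_eq_invert_comp_posHom]
  simpa using coeff_posHom_of_neg p (neg_neg_of_pos hz)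

lemma eq_zero_of_mul_T_eq_T_mul {x y : k[T;T⁻¹]} {a b : ℤ} (hx : x ∈ Set.range (posHom k))
    (hy : y ∈ Set.range (negHom k)) (h : y * T a = T b * x) (hab : a < b) : x = 0 := by
  obtain ⟨p, rfl⟩ := hx
  obtain ⟨q, rfl⟩ := hy
  ext z
  rcases lt_or_ge z 0 with hz | hz
  · exact coeff_posHom_of_neg p hz
  · have hcoeff := congrArg (·.coeff (z + b)) h
    simp only [coeff_T_mul, coeff_mul_T, add_sub_cancel_right] at hcoeff
    rw [← hcoeff]
    exact coeff_negHom_of_pos q (by omega)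

lemma apply_eq_zero_of_transition {ι κ : Type*} [Fintype ι] [Fintype κ] [DecidableEq ι]
    [DecidableEq κ] {u : κ → ℤ} {v : ι → ℤ} {A B : Matrix ι κ k[T;T⁻¹]}
    (hA : ∀ i j, A i j ∈ Set.range (posHom k)) (hB : ∀ i j, B i j ∈ Set.range (negHom k))
    (hglue : B * Matrix.diagonal (fun j => (T (-(u j)) : k[T;T⁻¹]))
      = Matrix.diagonal (fun i => (T (-(v i)) : k[T;T⁻¹])) * A)
    {i : ι} {j : κ} (hij : v i < u j) : A i j = 0 := by
  have h := congrFun (congrFun hglue i) j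
  rw [Matrix.mul_diagonal, Matrix.diagonal_mul] at h
  exact eq_zero_of_mul_T_eq_T_mul (hA i j) (hB i j) h (by omega)

end Charts

namespace Matrix

variable {R : Type*} {ι κ : Type*} [Fintype ι] [Fintype κ] [DecidableEq κ]

lemma mul_eq_mul_of_mul_eq_mul [Semiring R] [DecidableEq ι] {A B : Matrix ι κ R}
    {A' B' : Matrix κ ι R} {X : Matrix κ κ R} {Y : Matrix ι ι R} (hB'B : B' * B = 1) (hAA' : A * A' = 1)
    (h : B * X = Y * A) : B' * Y = X * A' :=
  calc
    B' * Y = B' * (Y * A) * A' := by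
      rw [Matrix.mul_assoc, Matrix.mul_assoc, hAA', Matrix.mul_one]
    _ = X * A' := by rw [← h, ← Matrix.mul_assoc, hB'B, Matrix.one_mul]

lemma card_le_of_mul_eq_one [CommSemiring R] [StrongRankCondition R] {N : Matrix κ ι R}
    {M : Matrix ι κ R} (h : N * M = 1) : Fintype.card κ ≤ Fintype.card ι :=
  calc Fintype.card κ = (N * M).rank := by rw [h, rank_one]
    _ ≤ N.rank := rank_mul_le_left N M
    _ ≤ Fintype.card ι := rank_le_card_width N

lemma card_le_of_mul_eq_one_of_apply_eq_zero [CommSemiring R] [StrongRankCondition R]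
    {N : Matrix κ ι R} {M : Matrix ι κ R} (h : N * M = 1) (p : ι → Prop) (q : κ → Prop)
    [DecidablePred p] [DecidablePred q] (hM : ∀ i j, q j → ¬ p i → M i j = 0) :
    Fintype.card {j // q j} ≤ Fintype.card {i // p i} := by
  refine card_le_of_mul_eq_one (N := N.submatrix (↑) (↑)) (M := M.submatrix (↑) (↑)) ?_
  ext j j'
  have hentry := congrFun (congrFun h j) j'
  have hzero : ∑ i : {i // ¬ p i}, N j i * M i j' = 0 :=
    Fintype.sum_eq_zero _ fun i => by rw [hM i j' j'.2 i.2, mul_zero]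
  rw [mul_apply, ← Fintype.sum_subtype_add_sum_subtype p, hzero, add_zero] at hentry
  simpa [mul_apply, one_apply, Subtype.ext_iff] using hentry

end Matrix

section Counting

variable {α β : Type*} [Fintype α] [Fintype β]

lemma card_le_eq_card_eq_add_card_succ_le (f : α → ℤ) (d : ℤ) :
    Fintype.card {a // d ≤ f a}
      = Fintype.card {a // f a = d} + Fintype.card {a // d + 1 ≤ f a} := by
  rw [← Fintype.card_subtype_or_disjoint _ _ fun _ hd hl a ha => by
    linarith [hd a ha, hl a ha]]
  exact Fintype.card_congr (Equiv.subtypeEquivRight fun a => by omega)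

lemma card_eq_of_forall_card_le_eq {f : α → ℤ} {g : β → ℤ}
    (h : ∀ d, Fintype.card {a // d ≤ f a} = Fintype.card {b // d ≤ g b}) (d : ℤ) :
    Fintype.card {a // f a = d} = Fintype.card {b // g b = d} := by
  have := h d
  have := h (d + 1)
  have := card_le_eq_card_eq_add_card_succ_le f d
  have := card_le_eq_card_eq_add_card_succ_le g d
  omega

lemma exists_equiv_of_forall_card_le_eq {f : α → ℤ} {g : β → ℤ}
    (h : ∀ d, Fintype.card {a // d ≤ f a} = Fintype.card {b // d ≤ g b}) :
    ∃ e : α ≃ β, ∀ a, g (e a) = f a :=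
  ⟨Equiv.ofFiberEquiv fun d => Fintype.equivOfCardEq (card_eq_of_forall_card_le_eq h d),
    Equiv.ofFiberEquiv_map _⟩

end Counting

/-- An isomorphism `O(u₁) ⊕ ⋯ ⊕ O(uₙ) ≅ O(v₁) ⊕ ⋯ ⊕ O(vₘ)` is encoded by its matrices `A` over
`k[t]` and `B` over `k[t⁻¹]` on the two standard charts, with inverses `A'`, `B'`; compatibility
with the gluing reads `B · diag(t^{-uᵢ}) = diag(t^{-vⱼ}) · A` over `k[t, t⁻¹]`. -/
theorem stmt12_general (k : Type) [Field k] {n m : ℕ} (u : Fin n → ℤ) (v : Fin m → ℤ)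
    (A : Matrix (Fin m) (Fin n) (LaurentPolynomial k))
    (A' : Matrix (Fin n) (Fin m) (LaurentPolynomial k))
    (B : Matrix (Fin m) (Fin n) (LaurentPolynomial k))
    (B' : Matrix (Fin n) (Fin m) (LaurentPolynomial k))
    (hA : ∀ i j, A i j ∈ Set.range (posHom k)) (hA' : ∀ i j, A' i j ∈ Set.range (posHom k))
    (hB : ∀ i j, B i j ∈ Set.range (negHom k)) (hB' : ∀ i j, B' i j ∈ Set.range (negHom k))
    (hAA' : A * A' = 1) (hA'A : A' * A = 1)
    (hB'B : B' * B = 1)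
    (hglue : B * Matrix.diagonal (fun i => T (-(u i)) : Fin n → LaurentPolynomial k)
      = Matrix.diagonal (fun j => T (-(v j)) : Fin m → LaurentPolynomial k) * A) :
    n = m ∧ ∃ e : Fin n ≃ Fin m, ∀ i, v (e i) = u i := by
  have hA0 : ∀ i j, v i < u j → A i j = 0 := fun _ _ =>
    apply_eq_zero_of_transition hA hB hglue
  have hA'0 : ∀ j i, u j < v i → A' j i = 0 := fun _ _ =>
    apply_eq_zero_of_transition hA' hB' (Matrix.mul_eq_mul_of_mul_eq_mul hB'B hAA' hglue)
  have hcount : ∀ d, Fintype.card {j // d ≤ u j} = Fintype.card {i // d ≤ v i} := fun d =>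
    le_antisymm
      (Matrix.card_le_of_mul_eq_one_of_apply_eq_zero hA'A _ _ fun i j hj hi => hA0 i j (by omega))
      (Matrix.card_le_of_mul_eq_one_of_apply_eq_zero hAA' _ _ fun j i hi hj => hA'0 j i (by omega))
  obtain ⟨e, he⟩ := exists_equiv_of_forall_card_le_eq hcount
  exact ⟨by simpa using Fintype.card_congr e, e, he⟩

/-- (Uniqueness in Grothendieck's splitting theorem on `ℙ¹_k`.) In terms of transition
matrices over `k[t, t⁻¹]`: an isomorphism `O(u₁) ⊕ ⋯ ⊕ O(uₙ) ≅ O(v₁) ⊕ ⋯ ⊕ O(vₘ)` is a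
pair of invertible matrices `A` over `k[t]` and `B` over `k[t⁻¹]` with
`B · diag(t^{-uᵢ}) = diag(t^{-vⱼ}) · A`.  Whenever such data exist, `n = m` and the
sequences `u`, `v` coincide up to permutation. -/
theorem stmt12 (k : Type) [Field k] {n m : ℕ} (u : Fin n → ℤ) (v : Fin m → ℤ)
    (A : Matrix (Fin m) (Fin n) (LaurentPolynomial k))
    (A' : Matrix (Fin n) (Fin m) (LaurentPolynomial k))
    (B : Matrix (Fin m) (Fin n) (LaurentPolynomial k))
    (B' : Matrix (Fin n) (Fin m) (LaurentPolynomial k))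
    (hA : ∀ i j, A i j ∈ Set.range (posHom k)) (hA' : ∀ i j, A' i j ∈ Set.range (posHom k))
    (hB : ∀ i j, B i j ∈ Set.range (negHom k)) (hB' : ∀ i j, B' i j ∈ Set.range (negHom k))
    (hAA' : A * A' = 1) (hA'A : A' * A = 1)
    (hBB' : B * B' = 1) (hB'B : B' * B = 1)
    (hglue : B * Matrix.diagonal (fun i => T (-(u i)) : Fin n → LaurentPolynomial k)
      = Matrix.diagonal (fun j => T (-(v j)) : Fin m → LaurentPolynomial k) * A) :
    n = m ∧ ∃ e : Fin n ≃ Fin m, ∀ i, v (e i) = u i :=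
  stmt12_general k u v A A' B B' hA hA' hB hB' hAA' hA'A hB'B hglue
end
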